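/- arXiv:2109.11128 — 5 statements merged into one kernel-verified Lean document; each statement's English description precedes it below -/
import Mathlib

section
/- For σ = 1/φ and any fixed vertex v of a connected locally finite graph G, the function pag(u) = σ^(d(u,v)) is a pagoda: for every path a–b–c of three distinct vertices in G, pag(a) ≤ pag(b) + pag(c). -/
theorem golden_pagoda_is_pagoda {V : Type*} (G : SimpleGraph V)
    (hconn : G.Connected) (hlf : ∀ u : V, (G.neighborSet u).Finite)
    (v : V) (φ σ : ℝ) (hφ : φ = (1 + Real.sqrt 5) / 2) (hσ : σ = 1 / φ) :
    ∀ a b c : V, a ≠ b → b ≠ c → a ≠ c → G.Adj a b → G.Adj b c →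
      σ ^ G.dist a v ≤ σ ^ G.dist b v + σ ^ G.dist c v := by
  have h5 : Real.sqrt 5 ^ 2 = 5 := Real.sq_sqrt (by norm_num)
  have h5pos : (2:ℝ) ≤ Real.sqrt 5 := by
    nlinarith [Real.sqrt_nonneg 5]
  have hφpos : (1:ℝ) < φ := by rw [hφ]; linarith
  have hσpos : 0 < σ := by rw [hσ]; positivity
  have hσlt : σ < 1 := by
    rw [hσ]; rw [div_lt_one (by linarith)]; linarith
  have hfib : σ ^ 2 + σ = 1 := by
    have hφ2 : φ ^ 2 = φ + 1 := by rw [hφ]; nlinarith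
    rw [hσ]
    field_simp
    nlinarith
  intro a b c hab hbc hac hAab hAbc
  set da := G.dist a v
  have hdab : G.dist a b = 1 := (SimpleGraph.dist_eq_one_iff_adj).mpr hAab
  have hdac : G.dist a c ≤ 2 := by
    have := hconn.dist_triangle (u := a) (v := b) (w := c)
    have hdbc : G.dist b c = 1 := (SimpleGraph.dist_eq_one_iff_adj).mpr hAbc
    omega
  have h1 : G.dist b v ≤ da + 1 := by
    have := hconn.dist_triangle (u := b) (v := a) (w := v)
    have : G.dist b a = 1 := by rw [SimpleGraph.dist_comm]; exact hdab
    have := hconn.dist_triangle (u := b) (v := a) (w := v)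
    omega
  have h2 : G.dist c v ≤ da + 2 := by
    have := hconn.dist_triangle (u := c) (v := a) (w := v)
    have : G.dist c a ≤ 2 := by rw [SimpleGraph.dist_comm]; exact hdac
    omega
  have e1 : σ ^ (da + 1) ≤ σ ^ G.dist b v :=
    pow_le_pow_of_le_one hσpos.le hσlt.le h1
  have e2 : σ ^ (da + 2) ≤ σ ^ G.dist c v :=
    pow_le_pow_of_le_one hσpos.le hσlt.le h2
  have key : σ ^ (da + 1) + σ ^ (da + 2) = σ ^ da := by
    have : σ ^ da * (σ + σ ^ 2) = σ ^ da := by rw [add_comm σ, hfib, mul_one]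
    calc σ ^ (da + 1) + σ ^ (da + 2) = σ ^ da * (σ + σ ^ 2) := by ring
    _ = σ ^ da := this
  linarith
end

section
/- If there exists one vertex w of a connected locally finite graph G such that Σ_{n≥0} d_n(w)·σ^n converges, then for every vertex v of G the sum Σ_{n≥0} d_n(v)·σ^n converges. -/
private lemma sphere_finite {V : Type*} (G : SimpleGraph V) (hconn : G.Connected)
    (hlf : ∀ u : V, (G.neighborSet u).Finite) (w : V) :
    ∀ n : ℕ, ({u : V | G.dist u w = n}).Finite := by
  intro n
  induction n with
  | zero =>
    apply Set.Finite.subset (Set.finite_singleton w)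
    intro u hu
    simp only [Set.mem_setOf_eq] at hu
    exact hconn.dist_eq_zero_iff.mp hu
  | succ n ih =>
    apply Set.Finite.subset (ih.biUnion (fun x _ => hlf x))
    intro u hu
    simp only [Set.mem_setOf_eq] at hu
    obtain ⟨p, hp⟩ := (hconn.preconnected u w).exists_walk_length_eq_dist
    rw [hu] at hp
    cases p with
    | nil => simp at hp
    | @cons _ x _ h q =>
      simp only [SimpleGraph.Walk.length_cons] at hp
      have hq : G.dist x w ≤ n := by
        have := G.dist_le q; omega
      have hux : G.dist u x ≤ 1 := by
        have := G.dist_le h.toWalk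
        simpa using this
      have ht := hconn.dist_triangle (u := u) (v := x) (w := w)
      have hx : G.dist x w = n := by omega
      exact Set.mem_biUnion hx h.symm

theorem valued_of_exists_vertex {V : Type*} (G : SimpleGraph V)
    (hconn : G.Connected) (hlf : ∀ u : V, (G.neighborSet u).Finite)
    (σ : ℝ) (hσ : σ = (Real.sqrt 5 - 1) / 2)
    (w : V)
    (hsum : Summable (fun n : ℕ => (Nat.card {u : V | G.dist u w = n} : ℝ) * σ ^ n)) :
    ∀ v : V, Summable (fun n : ℕ => (Nat.card {u : V | G.dist u v = n} : ℝ) * σ ^ n) := by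
  classical
  have h15 : (1 : ℝ) < Real.sqrt 5 := by
    rw [show (1:ℝ) = Real.sqrt 1 by simp]
    exact Real.sqrt_lt_sqrt (by norm_num) (by norm_num)
  have h53 : Real.sqrt 5 < 3 := by
    rw [show (3:ℝ) = Real.sqrt 9 by rw [show (9:ℝ) = 3^2 by norm_num, Real.sqrt_sq (by norm_num)]]
    exact Real.sqrt_lt_sqrt (by norm_num) (by norm_num)
  have hσ0 : 0 < σ := by rw [hσ]; linarith
  have hσ1 : σ < 1 := by rw [hσ]; linarith
  intro v
  set k := G.dist v w with hk
  set F : ℕ → ℝ := fun n => (Nat.card {u : V | G.dist u w = n} : ℝ) * σ ^ n with hF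
  have hFnn : ∀ n, 0 ≤ F n := fun n => mul_nonneg (Nat.cast_nonneg _) (pow_nonneg hσ0.le _)
  -- shifted summability
  have hshift : ∀ j : ℕ, Summable (fun n : ℕ => F ((n + j) - k)) := by
    intro j
    have h1 : Summable (fun n : ℕ => F (n + j)) := (summable_nat_add_iff j).mpr hsum
    have h2 : Summable (fun n : ℕ => F (((n + k) + j) - k)) := by
      have heq : (fun n : ℕ => F (((n + k) + j) - k)) = fun n : ℕ => F (n + j) := by
        funext n; congr 1; omega
      rw [heq]; exact h1
    exact (summable_nat_add_iff k).mp h2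
  have hfin := sphere_finite G hconn hlf w
  have hfinv := sphere_finite G hconn hlf v
  -- cardinality bound
  have hcard : ∀ n : ℕ, Nat.card {u : V | G.dist u v = n}
      ≤ ∑ j ∈ Finset.range (2*k+1), Nat.card {u : V | G.dist u w = (n + j) - k} := by
    intro n
    have hsub : (hfinv n).toFinset ⊆
        (Finset.range (2*k+1)).biUnion (fun j => (hfin ((n + j) - k)).toFinset) := by
      intro u hu
      simp only [Set.Finite.mem_toFinset, Set.mem_setOf_eq] at hu
      have h1 : G.dist u w ≤ n + k := by
        have := hconn.dist_triangle (u := u) (v := v) (w := w)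
        omega
      have h2 : n ≤ G.dist u w + k := by
        have := hconn.dist_triangle (u := u) (v := w) (w := v)
        have hc : G.dist w v = G.dist v w := SimpleGraph.dist_comm
        omega
      simp only [Finset.mem_biUnion, Finset.mem_range, Set.Finite.mem_toFinset,
        Set.mem_setOf_eq]
      exact ⟨(G.dist u w + k) - n, by omega, by omega⟩
    calc Nat.card {u : V | G.dist u v = n} = (hfinv n).toFinset.card := by
          rw [Nat.card_coe_set_eq, Set.ncard_eq_toFinset_card _ (hfinv n)]
      _ ≤ ((Finset.range (2*k+1)).biUnion (fun j => (hfin ((n + j) - k)).toFinset)).card :=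
          Finset.card_le_card hsub
      _ ≤ ∑ j ∈ Finset.range (2*k+1), (hfin ((n + j) - k)).toFinset.card :=
          Finset.card_biUnion_le
      _ = ∑ j ∈ Finset.range (2*k+1), Nat.card {u : V | G.dist u w = (n + j) - k} := by
          refine Finset.sum_congr rfl fun j _ => ?_
          rw [Nat.card_coe_set_eq, Set.ncard_eq_toFinset_card _ (hfin ((n + j) - k))]
  -- comparison
  have hH : Summable (fun n : ℕ => σ⁻¹ ^ k * ∑ j ∈ Finset.range (2*k+1), F ((n + j) - k)) := by
    apply Summable.mul_left
    have : ∀ j ∈ Finset.range (2*k+1), Summable (fun n : ℕ => F ((n + j) - k)) :=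
      fun j _ => hshift j
    revert this
    generalize Finset.range (2*k+1) = s
    intro hs
    induction s using Finset.induction with
    | empty => simpa using summable_zero
    | insert _ _ hx ih =>
      rename_i a s
      simp only [Finset.sum_insert hx]
      exact (hs a (Finset.mem_insert_self a s)).add
        (ih fun i hi => hs i (Finset.mem_insert_of_mem hi))
  apply Summable.of_nonneg_of_le
    (fun n => mul_nonneg (Nat.cast_nonneg _) (pow_nonneg hσ0.le _)) _ hH
  intro n
  have hpow : ∀ j ∈ Finset.range (2*k+1), σ ^ n ≤ σ⁻¹ ^ k * σ ^ ((n + j) - k) := by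
    intro j hj
    simp only [Finset.mem_range] at hj
    have hm : (n + j) - k ≤ n + k := by omega
    have h1 : σ ^ (n + k) ≤ σ ^ ((n + j) - k) :=
      pow_le_pow_of_le_one hσ0.le hσ1.le hm
    have h2 : σ ^ n = σ⁻¹ ^ k * σ ^ (n + k) := by
      rw [pow_add]
      field_simp
      rw [one_div, inv_pow, inv_mul_cancel₀ (pow_ne_zero _ hσ0.ne')]
    rw [h2]
    exact mul_le_mul_of_nonneg_left h1 (pow_nonneg (inv_nonneg.mpr hσ0.le) k)
  calc (Nat.card {u : V | G.dist u v = n} : ℝ) * σ ^ n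
      ≤ (∑ j ∈ Finset.range (2*k+1), (Nat.card {u : V | G.dist u w = (n + j) - k} : ℝ)) * σ ^ n := by
        apply mul_le_mul_of_nonneg_right _ (pow_nonneg hσ0.le n)
        have := hcard n
        exact_mod_cast Nat.cast_le.mpr this
    _ = ∑ j ∈ Finset.range (2*k+1), (Nat.card {u : V | G.dist u w = (n + j) - k} : ℝ) * σ ^ n := by
        rw [Finset.sum_mul]
    _ ≤ ∑ j ∈ Finset.range (2*k+1),
          (Nat.card {u : V | G.dist u w = (n + j) - k} : ℝ) * (σ⁻¹ ^ k * σ ^ ((n + j) - k)) := by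
        refine Finset.sum_le_sum fun j hj => ?_
        exact mul_le_mul_of_nonneg_left (hpow j hj) (Nat.cast_nonneg _)
    _ = σ⁻¹ ^ k * ∑ j ∈ Finset.range (2*k+1), F ((n + j) - k) := by
        rw [Finset.mul_sum]
        refine Finset.sum_congr rfl fun j _ => ?_
        simp only [hF]
        ring
end

section
/- On the ray graph ℕ (vertices ℕ, edges {n, n+1}), if the initial state has the single empty vertex 0 (all other vertices hold pegs), then after n jumps the state is forced: the only legal n-th jump is (2n)·(2n−1)→(2n−2), and consequently the set of occupied vertices in the limit state S_ω is infinite. -/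
/-- The ray graph on ℕ: vertices are natural numbers, `m` and `n` are adjacent
iff they differ by one. -/
def rayGraph : SimpleGraph ℕ where
  Adj m n := m + 1 = n ∨ n + 1 = m
  symm := ⟨by intro m n h; tauto⟩
  loopless := ⟨by intro m h; omega⟩

/-- A legal peg solitaire jump on a graph: `S'` results from `S` by jumping a peg
from `u` over `v` onto `w`. -/
def IsJump {V : Type*} (G : SimpleGraph V) (S S' : Set V) (u v w : V) : Prop :=
  u ∈ S ∧ v ∈ S ∧ w ∉ S ∧ G.Adj u v ∧ G.Adj v w ∧ u ≠ w ∧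
    S' = (S \ {u, v}) ∪ {w}

/-- The forced state after `n` jumps: even vertices below `2n` are occupied,
as are all vertices from `2n+1` on. -/
def rayTarget (n : ℕ) : Set ℕ := {m | (m % 2 = 0 ∧ m < 2 * n) ∨ 2 * n + 1 ≤ m}

theorem ray_empty_zero_forced (S : ℕ → Set ℕ)
    (h0 : S 0 = {k : ℕ | k ≠ 0})
    (hstep : ∀ n : ℕ, ∃ u v w : ℕ, IsJump rayGraph (S n) (S (n + 1)) u v w) :
    (∀ n : ℕ, ∀ u v w : ℕ, IsJump rayGraph (S n) (S (n + 1)) u v w →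
        u = 2 * (n + 1) ∧ v = 2 * n + 1 ∧ w = 2 * n) ∧
      {k : ℕ | ∃ N : ℕ, ∀ n : ℕ, N ≤ n → k ∈ S n}.Infinite := by
  have forced : ∀ (n : ℕ) (T T' : Set ℕ), T = rayTarget n → ∀ u v w : ℕ,
      IsJump rayGraph T T' u v w →
      u = 2 * (n + 1) ∧ v = 2 * n + 1 ∧ w = 2 * n ∧ T' = rayTarget (n + 1) := by
    intro n T T' hT u v w h
    obtain ⟨hu, hv, hw, huv, hvw, hne, hT'⟩ := h
    subst hT
    have huv' : u + 1 = v ∨ v + 1 = u := huv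
    have hvw' : v + 1 = w ∨ w + 1 = v := hvw
    simp only [rayTarget, Set.mem_setOf_eq] at hu hv hw
    have huvw : u = 2 * (n + 1) ∧ v = 2 * n + 1 ∧ w = 2 * n := by omega
    refine ⟨huvw.1, huvw.2.1, huvw.2.2, ?_⟩
    obtain ⟨rfl, rfl, rfl⟩ := huvw
    rw [hT']
    ext m
    simp only [rayTarget, Set.mem_union, Set.mem_diff, Set.mem_insert_iff,
      Set.mem_singleton_iff, Set.mem_setOf_eq]
    omega
  have hinv : ∀ n : ℕ, S n = rayTarget n := by
    intro n
    induction n with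
    | zero =>
      rw [h0]
      ext m
      simp only [rayTarget, Set.mem_setOf_eq]
      omega
    | succ n ih =>
      obtain ⟨u, v, w, h⟩ := hstep n
      exact (forced n (S n) (S (n + 1)) ih u v w h).2.2.2
  constructor
  · intro n u v w h
    have := forced n (S n) (S (n + 1)) (hinv n) u v w h
    exact ⟨this.1, this.2.1, this.2.2.1⟩
  · apply Set.infinite_of_injective_forall_mem (f := fun k : ℕ => 2 * k)
    · intro a b hab
      simpa using hab
    · intro k
      refine ⟨k + 1, fun n hn => ?_⟩
      rw [hinv n]
      simp only [rayTarget, Set.mem_setOf_eq]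
      omega
end

section
/- On the ray graph ℕ, starting from the state whose unique empty vertex is 1, performing the jumps (2n+1)·(2n)→(2n−1) for n = 1, 2, 3, … yields a well-defined limit state S_ω = {0} ∪ {n : n odd}: each vertex is involved in at most finitely many of these jumps, and the limit set of occupied vertices is exactly the odd numbers together with 0. -/
theorem ray_empty_one_clear_half (S : ℕ → Set ℕ)
    (h0 : S 0 = {k : ℕ | k ≠ 1})
    (hstep : ∀ n : ℕ, S (n + 1) = (S n \ {2 * n + 3, 2 * n + 2}) ∪ {2 * n + 1}) :
    (∀ n : ℕ, 2 * n + 3 ∈ S n ∧ 2 * n + 2 ∈ S n ∧ 2 * n + 1 ∉ S n) ∧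
      (∀ k : ℕ, {n : ℕ | k = 2 * n + 3 ∨ k = 2 * n + 2 ∨ k = 2 * n + 1}.Finite) ∧
      ∀ k : ℕ, (∃ N : ℕ, ∀ n : ℕ, N ≤ n → k ∈ S n) ↔ (k = 0 ∨ Odd k) := by
  have key : ∀ n : ℕ, S n =
      {k : ℕ | k = 0 ∨ (k % 2 = 1 ∧ k ≠ 2 * n + 1) ∨ (k % 2 = 0 ∧ 2 * n + 2 ≤ k)} := by
    intro n
    induction n with
    | zero =>
      rw [h0]; ext k; simp only [Set.mem_setOf_eq]; omega
    | succ n ih =>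
      rw [hstep n, ih]; ext k
      simp only [Set.mem_union, Set.mem_diff, Set.mem_insert_iff, Set.mem_singleton_iff,
        Set.mem_setOf_eq]
      omega
  refine ⟨?_, ?_, ?_⟩
  · intro n
    rw [key n]
    refine ⟨?_, ?_, ?_⟩ <;> simp only [Set.mem_setOf_eq] <;> omega
  · intro k
    apply Set.Finite.subset (Set.finite_Iic k)
    intro n hn
    simp only [Set.mem_setOf_eq] at hn
    simp only [Set.mem_Iic]
    omega
  · intro k
    constructor
    · rintro ⟨N, hN⟩
      rcases Nat.even_or_odd k with he | ho
      · rcases Nat.eq_zero_or_pos k with h | h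
        · exact Or.inl h
        · exfalso
          have := hN (max N k) (le_max_left _ _)
          rw [key] at this
          simp only [Set.mem_setOf_eq] at this
          have hk2 : k % 2 = 0 := Nat.even_iff.mp he
          have : 2 * max N k + 2 ≤ k ∨ k = 0 := by omega
          have hle : k ≤ max N k := le_max_right _ _
          omega
      · exact Or.inr ho
    · intro h
      refine ⟨k, fun n hn => ?_⟩
      rw [key n]
      simp only [Set.mem_setOf_eq]
      rcases h with h | h
      · exact Or.inl h
      · have := Nat.odd_iff.mp h; omega
end

section
/- Let G be a connected locally finite graph, v a vertex, and σ = 1/φ. If a sequence of states (S_n) arises from legal jumps and the value val_v(S_n) = Σ_{u∈S_n} σ^(d(u,v)) is finite for all n, then any jump removing a peg from v decreases the value by at least 1; consequently, if v ∈ S_k and the peg at v is jumped away at step k, then val_v(S_{k+1}) ≤ val_v(S_k) − 1. -/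
theorem jump_from_v_decreases_value {V : Type*} (G : SimpleGraph V)
    (hconn : G.Connected) (hlf : ∀ u : V, (G.neighborSet u).Finite)
    (v : V) (σ : ℝ) (hσ : σ = (Real.sqrt 5 - 1) / 2)
    (S : Set V) (w x : V)
    (hv : v ∈ S) (hw : w ∈ S) (hx : x ∉ S)
    (hvw : G.Adj v w) (hwx : G.Adj w x) (hvx : v ≠ x)
    (hsum : Summable (fun u : S => σ ^ G.dist u v)) :
    ∑' u : ((S \ {v, w}) ∪ {x} : Set V), σ ^ G.dist u v ≤
      (∑' u : S, σ ^ G.dist u v) - 1 := by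
  set f : V → ℝ := fun u => σ ^ G.dist u v with hf
  have h5 : (2:ℝ) < Real.sqrt 5 := by
    nlinarith [Real.sq_sqrt (by norm_num : (5:ℝ) ≥ 0), Real.sqrt_nonneg 5]
  have h5' : Real.sqrt 5 < 3 := by
    nlinarith [Real.sq_sqrt (by norm_num : (5:ℝ) ≥ 0), Real.sqrt_nonneg 5]
  have hσpos : 0 < σ := by rw [hσ]; linarith
  have hσlt1 : σ < 1 := by rw [hσ]; linarith
  have hvw' : v ≠ w := hvw.ne
  -- values at v, w, x
  have hfv : f v = 1 := by simp [hf, SimpleGraph.dist_self]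
  have hfw : f w = σ := by
    have : G.dist w v = 1 := SimpleGraph.dist_eq_one_iff_adj.mpr hvw.symm
    simp [hf, this]
  have hfx : f x ≤ σ := by
    have hd : 1 ≤ G.dist x v := hconn.pos_dist_of_ne (Ne.symm hvx)
    calc f x ≤ σ ^ 1 := pow_le_pow_of_le_one hσpos.le hσlt1.le hd
    _ = σ := pow_one σ
  -- summability facts
  have hind : Summable (S.indicator f) := summable_subtype_iff_indicator.mp hsum
  have hbase : Summable (f ∘ ((↑) : ↑(S \ ({v, w} : Set V)) → V)) := by
    apply summable_subtype_iff_indicator.mpr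
    have heq : (S \ {v, w}).indicator f = (S \ {v, w}).indicator (S.indicator f) := by
      rw [Set.indicator_indicator, Set.inter_eq_left.mpr Set.diff_subset]
    rw [heq]
    exact hind.indicator _
  have hsing : ∀ y : V, Summable (f ∘ ((↑) : ↑({y} : Set V) → V)) := by
    intro y
    haveI : Finite ({y} : Set V) := (Set.finite_singleton y).to_subtype
    exact Summable.of_finite
  have hpair : Summable (f ∘ ((↑) : ↑({v, w} : Set V) → V)) := by
    haveI : Finite ({v, w} : Set V) :=
      ((Set.finite_singleton w).insert v).to_subtype
    exact Summable.of_finite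
  -- decompose sum over S
  have hSeq : S = (S \ {v, w}) ∪ {v, w} := by
    rw [Set.diff_union_of_subset]
    intro u hu
    rcases hu with h | h
    · exact h ▸ hv
    · simp only [Set.mem_singleton_iff] at h; exact h ▸ hw
  have hdisj1 : Disjoint (S \ ({v, w} : Set V)) {v, w} := Set.disjoint_sdiff_left
  have hdisj2 : Disjoint (S \ ({v, w} : Set V)) {x} := by
    rw [Set.disjoint_singleton_right]
    exact fun h => hx h.1
  have hdisjvw : Disjoint ({v} : Set V) {w} := by
    rw [Set.disjoint_singleton_right]
    exact hvw'.symm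
  have hpair_eq : ∑' u : ({v, w} : Set V), f u = f v + f w := by
    have h1 : ({v, w} : Set V) = {v} ∪ {w} := (Set.singleton_union).symm
    rw [h1, Summable.tsum_union_disjoint hdisjvw (hsing v) (hsing w),
      tsum_singleton, tsum_singleton]
  have hS_eq : ∑' u : S, f u =
      (∑' u : ↑(S \ ({v, w} : Set V)), f u) + (f v + f w) := by
    conv_lhs => rw [hSeq]
    rw [Summable.tsum_union_disjoint hdisj1 hbase hpair, hpair_eq]
  have hT_eq : ∑' u : ((S \ {v, w}) ∪ {x} : Set V), f u =
      (∑' u : ↑(S \ ({v, w} : Set V)), f u) + f x := by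
    rw [Summable.tsum_union_disjoint hdisj2 hbase (hsing x), tsum_singleton]
  rw [hS_eq, hT_eq, hfv, hfw]
  linarith
end
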